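/- arXiv:1610.08700 — 6 statements merged into one kernel-verified Lean document; each statement's English description precedes it below -/
import Mathlib

section
/- In any Brouwerian algebra (a distributive lattice with top element 1 and relative pseudo-complementation →) generated by finitely many elements a₁,…,aₙ, the element a₁ ∧ … ∧ aₙ is the least element of the algebra; hence every finitely generated Brouwerian algebra has a least element and forms a Heyting algebra. -/
/-- Propositional formulas over ∧, ∨, →, ⊥ and variables. -/
inductive Fml : Type
  | var : ℕ → Fml
  | bot : Fml
  | and : Fml → Fml → Fml
  | or  : Fml → Fml → Fml
  | imp : Fml → Fml → Fml

namespace Fml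

/-- A formula is positive if it contains no ⊥. -/
def Positive : Fml → Prop
  | var _ => True
  | bot => False
  | and A B => A.Positive ∧ B.Positive
  | or A B => A.Positive ∧ B.Positive
  | imp A B => A.Positive ∧ B.Positive

/-- Evaluation in a Brouwerian (generalized Heyting) algebra, with a designated
value `z` interpreting ⊥. -/
def evalB {α : Type} [GeneralizedHeytingAlgebra α] (z : α) (ν : ℕ → α) : Fml → α
  | var n => ν n
  | bot => z
  | and A B => A.evalB z ν ⊓ B.evalB z ν
  | or A B => A.evalB z ν ⊔ B.evalB z ν
  | imp A B => A.evalB z ν ⇨ B.evalB z ν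

/-- Evaluation in a Heyting algebra (⊥ interpreted as the least element). -/
def eval {α : Type} [HeytingAlgebra α] (ν : ℕ → α) (A : Fml) : α := A.evalB ⊥ ν

/-- Evaluation of (positive) formulas in a Brouwerian algebra
(⊥ gets the junk value ⊤; it is irrelevant for positive formulas). -/
def pEval {α : Type} [GeneralizedHeytingAlgebra α] (ν : ℕ → α) (A : Fml) : α := A.evalB ⊤ ν

/-- Substitution. -/
def subst (σ : ℕ → Fml) : Fml → Fml
  | var n => σ n
  | bot => bot
  | and A B => and (A.subst σ) (B.subst σ)
  | or A B => or (A.subst σ) (B.subst σ)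
  | imp A B => imp (A.subst σ) (B.subst σ)

/-- Replacing every occurrence of ⊥ by the formula `C`. -/
def substBot : Fml → Fml → Fml
  | var n, _ => var n
  | bot, C => C
  | and A B, C => and (A.substBot C) (B.substBot C)
  | or A B, C => or (A.substBot C) (B.substBot C)
  | imp A B, C => imp (A.substBot C) (B.substBot C)

/-- The set of variables occurring in a formula. -/
def vars : Fml → Finset ℕ
  | var n => {n}
  | bot => ∅
  | and A B => A.vars ∪ B.vars
  | or A B => A.vars ∪ B.vars
  | imp A B => A.vars ∪ B.vars

end Fml

/-- The set of positive formulas. -/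
def PosFml : Set Fml := {A | A.Positive}

/-- A substitution is positive if all its values are positive formulas. -/
def PosSubst (σ : ℕ → Fml) : Prop := ∀ n, (σ n).Positive

/-- Validity of a formula in a Heyting algebra. -/
def ValidH (α : Type) [HeytingAlgebra α] (A : Fml) : Prop := ∀ ν : ℕ → α, A.eval ν = ⊤

/-- Intuitionistic propositional logic (via algebraic semantics). -/
def IntL : Set Fml := {A | ∀ (α : Type) [HeytingAlgebra α], ValidH α A}

/-- Superintuitionistic logics. -/
structure IsSILogic (L : Set Fml) : Prop where
  int_sub : IntL ⊆ L
  mp : ∀ A B : Fml, Fml.imp A B ∈ L → A ∈ L → B ∈ L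
  subst_closed : ∀ A ∈ L, ∀ σ : ℕ → Fml, A.subst σ ∈ L

/-- The least superintuitionistic logic containing `Γ`. -/
def IntPlus (Γ : Set Fml) : Set Fml := ⋂₀ {L | IsSILogic L ∧ Γ ⊆ L}

/-- The positive fragment of intuitionistic logic. -/
def IntLPos : Set Fml := IntL ∩ PosFml

/-- Positive logics. -/
structure IsPosLogic (P : Set Fml) : Prop where
  pos : P ⊆ PosFml
  int_sub : IntLPos ⊆ P
  mp : ∀ A B : Fml, Fml.imp A B ∈ P → A ∈ P → B ∈ P
  subst_closed : ∀ A ∈ P, ∀ σ : ℕ → Fml, PosSubst σ → A.subst σ ∈ P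

/-- The least positive logic containing `Γ`. -/
def IntPosPlus (Γ : Set Fml) : Set Fml := ⋂₀ {P | IsPosLogic P ∧ Γ ⊆ P}

/-- Homomorphism of Brouwerian algebras (preserves ⊓, ⊔, ⇨, ⊤). -/
def IsBrHom {α β : Type} [GeneralizedHeytingAlgebra α] [GeneralizedHeytingAlgebra β]
    (f : α → β) : Prop :=
  (∀ a b : α, f (a ⊓ b) = f a ⊓ f b) ∧ (∀ a b : α, f (a ⊔ b) = f a ⊔ f b) ∧
  (∀ a b : α, f (a ⇨ b) = f a ⇨ f b) ∧ f ⊤ = ⊤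

/-- A Heyting algebra is a model of a set of formulas `T`. -/
def Models (α : Type) [HeytingAlgebra α] (T : Set Fml) : Prop := ∀ A ∈ T, ValidH α A

/-- The variety (of Heyting algebras) axiomatized by `T` is B-saturated: any Heyting
algebra whose Brouwerian reduct embeds into the reduct of a model of `T` is itself
a model of `T`. -/
def BSaturated (T : Set Fml) : Prop :=
  ∀ (α : Type) (iα : HeytingAlgebra α),
    (∃ (β : Type) (iβ : HeytingAlgebra β), @Models β iβ T ∧
      ∃ f : α → β, Function.Injective f ∧
        @IsBrHom α β iα.toGeneralizedHeytingAlgebra iβ.toGeneralizedHeytingAlgebra f) →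
    @Models α iα T

/-- A subset of a Brouwerian algebra closed under the Brouwerian operations. -/
def BrClosed {α : Type} [GeneralizedHeytingAlgebra α] (S : Set α) : Prop :=
  ⊤ ∈ S ∧ ∀ a ∈ S, ∀ b ∈ S, a ⊓ b ∈ S ∧ a ⊔ b ∈ S ∧ (a ⇨ b) ∈ S

/-- The Brouwerian subalgebra generated by a set. -/
def genBr {α : Type} [GeneralizedHeytingAlgebra α] (s : Set α) : Set α :=
  ⋂₀ {S | BrClosed S ∧ s ⊆ S}

/-- Conjunction of a list of variables (nonempty case is the intended one). -/
def conjList : List ℕ → Fml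
  | [] => Fml.imp (Fml.var 0) (Fml.var 0)
  | [n] => Fml.var n
  | n :: l => Fml.and (Fml.var n) (conjList l)

/-- The conjunction π^∧ of all variables in a finite set π. -/
def conjOf (π : Finset ℕ) : Fml := conjList (π.sort (· ≤ ·))

/-- Multiple-conclusion rules. -/
def MRule : Type := Finset Fml × Finset Fml

/-- A rule is positive if all its premises and conclusions are positive. -/
def PosRule (r : MRule) : Prop := (∀ A ∈ r.1, A.Positive) ∧ (∀ B ∈ r.2, B.Positive)

/-- Validity of a (positive) m-rule in a Brouwerian algebra. -/
def RuleValid (α : Type) [GeneralizedHeytingAlgebra α] (r : MRule) : Prop :=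
  ∀ ν : ℕ → α, (∀ A ∈ r.1, A.pEval ν = ⊤) → ∃ B ∈ r.2, B.pEval ν = ⊤

/-- A Brouwerian algebra is a model of a set of positive formulas. -/
def ModelsP (β : Type) [GeneralizedHeytingAlgebra β] (P : Set Fml) : Prop :=
  ∀ A ∈ P, ∀ ν : ℕ → β, A.pEval ν = ⊤

/-- Filter of a Brouwerian (or Heyting) algebra. -/
def IsFilter' {α : Type} [GeneralizedHeytingAlgebra α] (F : Set α) : Prop :=
  ⊤ ∈ F ∧ ∀ a b : α, a ∈ F → (a ⇨ b) ∈ F → b ∈ F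

/-- in a Brouwerian algebra generated by a₁,…,aₙ, the meet of the
generators is the least element; hence the algebra forms a Heyting algebra. -/
theorem stmt0 {α : Type} [gα : GeneralizedHeytingAlgebra α] {n : ℕ} (a : Fin n → α)
    (hgen : ∀ S : Set α, BrClosed S → (∀ i, a i ∈ S) → S = Set.univ) :
    IsLeast Set.univ (Finset.univ.inf a) ∧
      ∃ iα : HeytingAlgebra α, iα.toGeneralizedHeytingAlgebra = gα := by
  set m := Finset.univ.inf a with hm
  have hle : ∀ x : α, m ≤ x := by
    intro x
    have hS : {y : α | m ≤ y} = Set.univ := by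
      apply hgen
      · refine ⟨le_top, ?_⟩
        intro p hp q hq
        exact ⟨le_inf hp hq, hp.trans le_sup_left,
          le_himp_iff.mpr (inf_le_left.trans hq)⟩
      · intro i; exact Finset.inf_le (Finset.mem_univ i)
    have : x ∈ {y : α | m ≤ y} := hS ▸ Set.mem_univ x
    exact this
  refine ⟨⟨Set.mem_univ m, fun x _ => hle x⟩, ?_⟩
  refine ⟨?_, ?_⟩
  case _ =>
    exact { gα with bot := m, bot_le := hle, compl := (fun x => x ⇨ m), himp_bot := (fun _ => rfl) }
  case _ => rfl
end

section
/- Let A be a Heyting algebra and B ⊆ A a Brouwerian subreduct of A (a subalgebra of the {∧,∨,→,1}-reduct of A). Then every homomorphic image of B as a Brouwerian algebra is isomorphic to a Brouwerian subreduct of some homomorphic image of A as a Heyting algebra. Concretely, if φ: B → C is a surjective Brouwerian homomorphism with kernel filter F_φ = {b ∈ B : φ(b) = 1}, then C is isomorphic to the image of B in the quotient Heyting algebra A/[F_φ), where [F_φ) is the filter of A generated by F_φ. -/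
/-- The conclusion of Statement 3: ψ is a surjective Heyting homomorphism of A onto
the quotient by the filter generated by the kernel of φ, and e embeds C into it,
compatibly with φ and ψ. -/
def Stmt3Concl (α β γ δ : Type) [HeytingAlgebra α] [GeneralizedHeytingAlgebra β]
    [GeneralizedHeytingAlgebra γ] [HeytingAlgebra δ]
    (ι : β → α) (φ : β → γ) (ψ : α → δ) (e : γ → δ) : Prop :=
  Function.Surjective ψ ∧ IsBrHom ψ ∧ ψ ⊥ = ⊥ ∧
  {x : α | ψ x = ⊤} = ⋂₀ {G : Set α | IsFilter' G ∧ (ι '' {b : β | φ b = ⊤}) ⊆ G} ∧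
  Function.Injective e ∧ IsBrHom e ∧ ∀ b : β, e (φ b) = ψ (ι b)

namespace Stmt3Aux

variable {α : Type} [HeytingAlgebra α]

theorem filt_up {G : Set α} (hG : IsFilter' G) {a b : α} (ha : a ∈ G) (h : a ≤ b) : b ∈ G :=
  hG.2 a b ha (by rw [himp_eq_top_iff.2 h]; exact hG.1)

theorem filt_inf {G : Set α} (hG : IsFilter' G) {a b : α} (ha : a ∈ G) (hb : b ∈ G) :
    a ⊓ b ∈ G := by
  refine hG.2 b (a ⊓ b) hb (hG.2 a (b ⇨ a ⊓ b) ha ?_)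
  rw [himp_eq_top_iff.2 (le_himp_iff.2 le_rfl)]; exact hG.1

theorem filt_of_le2 {G : Set α} (hG : IsFilter' G) {a b c : α} (ha : a ∈ G) (hb : b ∈ G)
    (h : a ⊓ b ≤ c) : c ∈ G := filt_up hG (filt_inf hG ha hb) h

theorem himp_trans_le {a b c : α} : (a ⇨ b) ⊓ (b ⇨ c) ≤ a ⇨ c := by
  rw [le_himp_iff]
  calc ((a ⇨ b) ⊓ (b ⇨ c)) ⊓ a ≤ (b ⇨ c) ⊓ ((a ⇨ b) ⊓ a) :=
        le_inf (inf_le_left.trans inf_le_right)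
          (le_inf (inf_le_left.trans inf_le_left) inf_le_right)
    _ ≤ (b ⇨ c) ⊓ b := inf_le_inf_left _ himp_inf_le
    _ ≤ c := himp_inf_le

theorem cng_inf_le {a b a' b' : α} : (a ⇨ b) ⊓ (a' ⇨ b') ≤ (a ⊓ a') ⇨ (b ⊓ b') := by
  rw [le_himp_iff]
  refine le_inf ?_ ?_
  · exact (le_inf (inf_le_left.trans inf_le_left) (inf_le_right.trans inf_le_left)).trans
      himp_inf_le
  · exact (le_inf (inf_le_left.trans inf_le_right) (inf_le_right.trans inf_le_right)).trans
      himp_inf_le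

theorem cng_sup_le {a b a' b' : α} : (a ⇨ b) ⊓ (a' ⇨ b') ≤ (a ⊔ a') ⇨ (b ⊔ b') := by
  rw [le_himp_iff, inf_sup_left]
  refine sup_le ?_ ?_
  · exact le_sup_left.trans' ((le_inf (inf_le_left.trans inf_le_left) inf_le_right).trans
      himp_inf_le)
  · exact le_sup_right.trans' ((le_inf (inf_le_left.trans inf_le_right) inf_le_right).trans
      himp_inf_le)

theorem cng_himp_le {a b a' b' : α} : (b ⇨ a) ⊓ (a' ⇨ b') ≤ (a ⇨ a') ⇨ (b ⇨ b') := by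
  rw [le_himp_iff, le_himp_iff]
  set w := ((b ⇨ a) ⊓ (a' ⇨ b')) ⊓ (a ⇨ a') ⊓ b with hw
  have h1 : w ≤ a := (le_inf (inf_le_left.trans (inf_le_left.trans inf_le_left))
    inf_le_right).trans himp_inf_le
  have h2 : w ≤ a' := (le_inf (inf_le_left.trans inf_le_right) h1).trans himp_inf_le
  exact (le_inf (inf_le_left.trans (inf_le_left.trans inf_le_right)) h2).trans himp_inf_le

variable (G : Set α) (hG : IsFilter' G)
include hG

def qrel : α → α → Prop := fun a b => (a ⇨ b) ∈ G ∧ (b ⇨ a) ∈ G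

theorem qrel_refl (a : α) : qrel G a a := by
  constructor <;> (rw [himp_self]; exact hG.1)

theorem qrel_trans {a b c : α} (h1 : qrel G a b) (h2 : qrel G b c) : qrel G a c :=
  ⟨filt_of_le2 hG h1.1 h2.1 himp_trans_le, filt_of_le2 hG h2.2 h1.2 himp_trans_le⟩

def qs : Setoid α :=
  ⟨qrel G, ⟨qrel_refl G hG, fun h => ⟨h.2, h.1⟩, qrel_trans G hG⟩⟩

def HQuot := Quotient (qs G hG)

def hmk : α → HQuot G hG := Quotient.mk (qs G hG)

theorem le_resp (a₁ b₁ a₂ b₂ : α) (ha : qrel G a₁ a₂) (hb : qrel G b₁ b₂) :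
    ((a₁ ⇨ b₁) ∈ G) = ((a₂ ⇨ b₂) ∈ G) := by
  apply propext
  constructor
  · intro h
    exact filt_of_le2 hG (filt_of_le2 hG ha.2 h himp_trans_le) hb.1 himp_trans_le
  · intro h
    exact filt_of_le2 hG (filt_of_le2 hG ha.1 h himp_trans_le) hb.2 himp_trans_le

def hqLE : HQuot G hG → HQuot G hG → Prop :=
  Quotient.lift₂ (fun a b => (a ⇨ b) ∈ G) (le_resp G hG)

def hqInf : HQuot G hG → HQuot G hG → HQuot G hG :=
  Quotient.map₂ (· ⊓ ·) (fun _ _ ha _ _ hb =>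
    ⟨filt_of_le2 hG ha.1 hb.1 cng_inf_le, filt_of_le2 hG ha.2 hb.2 cng_inf_le⟩)

def hqSup : HQuot G hG → HQuot G hG → HQuot G hG :=
  Quotient.map₂ (· ⊔ ·) (fun _ _ ha _ _ hb =>
    ⟨filt_of_le2 hG ha.1 hb.1 cng_sup_le, filt_of_le2 hG ha.2 hb.2 cng_sup_le⟩)

def hqHimp : HQuot G hG → HQuot G hG → HQuot G hG :=
  Quotient.map₂ (· ⇨ ·) (fun _ _ ha _ _ hb =>
    ⟨filt_of_le2 hG ha.2 hb.1 cng_himp_le, filt_of_le2 hG ha.1 hb.2 cng_himp_le⟩)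

def hqCompl : HQuot G hG → HQuot G hG :=
  Quotient.map (·ᶜ) (fun a b h => by
    simp only [← himp_bot]
    exact ⟨filt_of_le2 hG h.2 (qrel_refl G hG (⊥:α)).1 cng_himp_le,
      filt_of_le2 hG h.1 (qrel_refl G hG (⊥:α)).1 cng_himp_le⟩)

theorem top_mem_of_eq {x : α} (h : x = ⊤) : x ∈ G := h ▸ hG.1

instance hqLat : Lattice (HQuot G hG) where
  le := hqLE G hG
  le_refl := fun a => Quotient.inductionOn a fun a => (qrel_refl G hG a).1
  le_trans := fun a b c => Quotient.inductionOn₃ a b c fun a b c h1 h2 =>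
    filt_of_le2 hG h1 h2 himp_trans_le
  le_antisymm := fun a b => Quotient.inductionOn₂ a b fun _ _ h1 h2 =>
    Quotient.sound ⟨h1, h2⟩
  inf := hqInf G hG
  sup := hqSup G hG
  le_sup_left := fun a b => Quotient.inductionOn₂ a b fun a b =>
    top_mem_of_eq G hG (himp_eq_top_iff.2 (le_sup_left (a := a) (b := b)))
  le_sup_right := fun a b => Quotient.inductionOn₂ a b fun a b =>
    top_mem_of_eq G hG (himp_eq_top_iff.2 (le_sup_right (a := a) (b := b)))
  sup_le := fun a b c => Quotient.inductionOn₃ a b c fun a b c h1 h2 => by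
    show (a ⊔ b ⇨ c) ∈ G
    rw [sup_himp_distrib]; exact filt_inf hG h1 h2
  inf_le_left := fun a b => Quotient.inductionOn₂ a b fun a b =>
    top_mem_of_eq G hG (himp_eq_top_iff.2 (inf_le_left (a := a) (b := b)))
  inf_le_right := fun a b => Quotient.inductionOn₂ a b fun a b =>
    top_mem_of_eq G hG (himp_eq_top_iff.2 (inf_le_right (a := a) (b := b)))
  le_inf := fun a b c => Quotient.inductionOn₃ a b c fun a b c h1 h2 => by
    show (a ⇨ b ⊓ c) ∈ G
    rw [himp_inf_distrib]; exact filt_inf hG h1 h2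

instance hqGHA : GeneralizedHeytingAlgebra (HQuot G hG) where
  top := hmk G hG ⊤
  le_top := fun a => Quotient.inductionOn a fun a =>
    top_mem_of_eq G hG (himp_eq_top_iff.2 le_top)
  himp := hqHimp G hG
  le_himp_iff := fun a b c => Quotient.inductionOn₃ a b c fun a b c => by
    show (a ⇨ b ⇨ c) ∈ G ↔ (a ⊓ b ⇨ c) ∈ G
    rw [himp_himp]

instance hq : HeytingAlgebra (HQuot G hG) where
  bot := hmk G hG ⊥
  bot_le := fun a => Quotient.inductionOn a fun a =>
    top_mem_of_eq G hG (bot_himp a)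
  compl := hqCompl G hG
  himp_bot := fun a => Quotient.inductionOn a fun a => by
    show hmk G hG (a ⇨ ⊥) = hmk G hG aᶜ
    rw [himp_bot]

theorem hmk_surj : Function.Surjective (hmk G hG) := Quotient.exists_rep

theorem hmk_eq_top_iff {x : α} : hmk G hG x = ⊤ ↔ x ∈ G := by
  constructor
  · intro h
    have h2 := (Quotient.exact (s := qs G hG) h).2
    rwa [top_himp] at h2
  · intro h
    refine Quotient.sound (s := qs G hG) ⟨top_mem_of_eq G hG (himp_top (a := x)), ?_⟩
    rwa [top_himp]

end Stmt3Aux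

namespace Stmt3Aux

variable {α : Type} [HeytingAlgebra α]

theorem mainProof {α β γ : Type} [HeytingAlgebra α] [GeneralizedHeytingAlgebra β]
    [GeneralizedHeytingAlgebra γ]
    (ι : β → α) (hι1 : Function.Injective ι) (hι2 : IsBrHom ι)
    (φ : β → γ) (hφ1 : Function.Surjective φ) (hφ2 : IsBrHom φ) :
    ∃ (δ : Type) (iδ : HeytingAlgebra δ) (ψ : α → δ) (e : γ → δ),
      @Stmt3Concl α β γ δ _ _ _ iδ ι φ ψ e := by
  classical
  obtain ⟨ιinf, ιsup, ιhimp, ιtop⟩ := hι2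
  obtain ⟨φinf, φsup, φhimp, φtop⟩ := hφ2
  set K : Set α := ι '' {b : β | φ b = ⊤} with hK
  set G : Set α := ⋂₀ {F : Set α | IsFilter' F ∧ K ⊆ F} with hGdef
  have hG : IsFilter' G := by
    constructor
    · exact fun F hF => hF.1.1
    · intro a b ha hab F hF
      exact hF.1.2 a b (ha F hF) (hab F hF)
  have hKG : K ⊆ G := fun x hx F hF => hF.2 hx
  -- key lemma: ι b ∈ G implies φ b = ⊤
  have key : ∀ b : β, ι b ∈ G → φ b = ⊤ := by
    intro b hb
    set G0 : Set α := {a : α | ∃ d : β, φ d = ⊤ ∧ ι d ≤ a} with hG0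
    have hF0 : IsFilter' G0 ∧ K ⊆ G0 := by
      refine ⟨⟨⟨⊤, φtop, by rw [ιtop]⟩, ?_⟩, ?_⟩
      · rintro a c ⟨d, hd, hda⟩ ⟨d', hd', hd'ab⟩
        refine ⟨d ⊓ d', by rw [φinf, hd, hd', inf_top_eq], ?_⟩
        rw [ιinf]
        exact (inf_le_inf hda hd'ab).trans (by rw [inf_comm]; exact himp_inf_le)
      · rintro x ⟨b', hb', rfl⟩
        exact ⟨b', hb', le_rfl⟩
    obtain ⟨d, hd, hdb⟩ := hb G0 hF0
    have h1 : ι (d ⇨ b) = ι ⊤ := by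
      rw [ιhimp, ιtop]
      exact himp_eq_top_iff.2 hdb
    have h2 : d ⇨ b = ⊤ := hι1 h1
    have h3 : φ d ≤ φ b := himp_eq_top_iff.1 (by rw [← φhimp, h2, φtop])
    rw [hd] at h3
    exact top_unique h3
  refine ⟨HQuot G hG, hq G hG, hmk G hG,
    fun c => hmk G hG (ι (hφ1 c).choose), ?_, ?_, ?_, ?_, ?_, ?_, ?_⟩
  · exact hmk_surj G hG
  · exact ⟨fun a b => rfl, fun a b => rfl, fun a b => rfl, rfl⟩
  · rfl
  · exact Set.ext fun x => hmk_eq_top_iff G hG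
  · -- injectivity of e
    have half : ∀ c c' : γ, hmk G hG (ι (hφ1 c).choose) = hmk G hG (ι (hφ1 c').choose) →
        c ≤ c' := by
      intro c c' h
      have hrel := Quotient.exact (s := qs G hG) h
      have h1 : ι ((hφ1 c).choose ⇨ (hφ1 c').choose) ∈ G := by
        rw [ιhimp]; exact hrel.1
      have h2 := key _ h1
      have h3 : φ (hφ1 c).choose ≤ φ (hφ1 c').choose :=
        himp_eq_top_iff.1 (by rw [← φhimp, h2])
      rwa [(hφ1 c).choose_spec, (hφ1 c').choose_spec] at h3
    intro c c' h
    exact le_antisymm (half c c' h) (half c' c h.symm)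
  · -- IsBrHom e
    have comm : ∀ b : β, hmk G hG (ι (hφ1 (φ b)).choose) = hmk G hG (ι b) := by
      intro b
      have hb' : φ (hφ1 (φ b)).choose = φ b := (hφ1 (φ b)).choose_spec
      refine Quotient.sound (s := qs G hG) ⟨?_, ?_⟩
      · show (ι (hφ1 (φ b)).choose ⇨ ι b) ∈ G
        rw [← ιhimp]
        exact hKG ⟨_, by simp only [Set.mem_setOf_eq, φhimp, hb', himp_self], rfl⟩
      · show (ι b ⇨ ι (hφ1 (φ b)).choose) ∈ G
        rw [← ιhimp]
        exact hKG ⟨_, by simp only [Set.mem_setOf_eq, φhimp, hb', himp_self], rfl⟩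
    refine ⟨?_, ?_, ?_, ?_⟩
    · intro a b
      obtain ⟨x, rfl⟩ := hφ1 a; obtain ⟨y, rfl⟩ := hφ1 b
      calc hmk G hG (ι (hφ1 (φ x ⊓ φ y)).choose)
          = hmk G hG (ι (hφ1 (φ (x ⊓ y))).choose) := by rw [φinf]
        _ = hmk G hG (ι (x ⊓ y)) := comm _
        _ = hmk G hG (ι x ⊓ ι y) := by rw [ιinf]
        _ = hmk G hG (ι x) ⊓ hmk G hG (ι y) := rfl
        _ = hmk G hG (ι (hφ1 (φ x)).choose) ⊓ hmk G hG (ι (hφ1 (φ y)).choose) := by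
            rw [comm, comm]
    · intro a b
      obtain ⟨x, rfl⟩ := hφ1 a; obtain ⟨y, rfl⟩ := hφ1 b
      calc hmk G hG (ι (hφ1 (φ x ⊔ φ y)).choose)
          = hmk G hG (ι (hφ1 (φ (x ⊔ y))).choose) := by rw [φsup]
        _ = hmk G hG (ι (x ⊔ y)) := comm _
        _ = hmk G hG (ι x ⊔ ι y) := by rw [ιsup]
        _ = hmk G hG (ι x) ⊔ hmk G hG (ι y) := rfl
        _ = hmk G hG (ι (hφ1 (φ x)).choose) ⊔ hmk G hG (ι (hφ1 (φ y)).choose) := by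
            rw [comm, comm]
    · intro a b
      obtain ⟨x, rfl⟩ := hφ1 a; obtain ⟨y, rfl⟩ := hφ1 b
      calc hmk G hG (ι (hφ1 (φ x ⇨ φ y)).choose)
          = hmk G hG (ι (hφ1 (φ (x ⇨ y))).choose) := by rw [φhimp]
        _ = hmk G hG (ι (x ⇨ y)) := comm _
        _ = hmk G hG (ι x ⇨ ι y) := by rw [ιhimp]
        _ = hmk G hG (ι x) ⇨ hmk G hG (ι y) := rfl
        _ = hmk G hG (ι (hφ1 (φ x)).choose) ⇨ hmk G hG (ι (hφ1 (φ y)).choose) := by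
            rw [comm, comm]
    · calc hmk G hG (ι (hφ1 (⊤ : γ)).choose)
          = hmk G hG (ι (hφ1 (φ (⊤ : β))).choose) := by rw [φtop]
        _ = hmk G hG (ι ⊤) := by
            have comm : ∀ b : β, hmk G hG (ι (hφ1 (φ b)).choose) = hmk G hG (ι b) := by
              intro b
              have hb' : φ (hφ1 (φ b)).choose = φ b := (hφ1 (φ b)).choose_spec
              refine Quotient.sound (s := qs G hG) ⟨?_, ?_⟩
              · show (ι (hφ1 (φ b)).choose ⇨ ι b) ∈ G
                rw [← ιhimp]
                exact hKG ⟨_, by simp only [Set.mem_setOf_eq, φhimp, hb', himp_self], rfl⟩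
              · show (ι b ⇨ ι (hφ1 (φ b)).choose) ∈ G
                rw [← ιhimp]
                exact hKG ⟨_, by simp only [Set.mem_setOf_eq, φhimp, hb', himp_self], rfl⟩
            exact comm ⊤
        _ = hmk G hG ⊤ := by rw [ιtop]
        _ = ⊤ := rfl
  · -- commutativity e ∘ φ = ψ ∘ ι
    intro b
    have hb' : φ (hφ1 (φ b)).choose = φ b := (hφ1 (φ b)).choose_spec
    refine Quotient.sound (s := qs G hG) ⟨?_, ?_⟩
    · show (ι (hφ1 (φ b)).choose ⇨ ι b) ∈ G
      rw [← ιhimp]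
      exact hKG ⟨_, by simp only [Set.mem_setOf_eq, φhimp, hb', himp_self], rfl⟩
    · show (ι b ⇨ ι (hφ1 (φ b)).choose) ∈ G
      rw [← ιhimp]
      exact hKG ⟨_, by simp only [Set.mem_setOf_eq, φhimp, hb', himp_self], rfl⟩

end Stmt3Aux

/-- every Brouwerian homomorphic image of a Brouwerian subreduct B of a
Heyting algebra A is (isomorphic to) a Brouwerian subreduct of a homomorphic image of A,
namely the quotient of A by the filter generated by the kernel filter of φ. -/
theorem stmt3 {α β γ : Type} [HeytingAlgebra α] [GeneralizedHeytingAlgebra β]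
    [GeneralizedHeytingAlgebra γ]
    (ι : β → α) (hι1 : Function.Injective ι) (hι2 : IsBrHom ι)
    (φ : β → γ) (hφ1 : Function.Surjective φ) (hφ2 : IsBrHom φ) :
    ∃ (δ : Type) (iδ : HeytingAlgebra δ) (ψ : α → δ) (e : γ → δ),
      @Stmt3Concl α β γ δ _ _ _ iδ ι φ ψ e :=
  Stmt3Aux.mainProof ι hι1 hι2 φ hφ1 hφ2
end

section
/- Let V be a variety of Heyting algebras and let V⁺ denote the class of all Brouwerian algebras that embed (as Brouwerian algebras) into the Brouwerian reduct of some member of V. Then V⁺ is closed under homomorphic images, subalgebras, and direct products; in particular V⁺ is a variety of Brouwerian algebras. -/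
/-- B is in V⁺: it B-embeds into (the Brouwerian reduct of) some model of T. -/
def InVPlus (T : Set Fml) (β : Type) [GeneralizedHeytingAlgebra β] : Prop :=
  ∃ (γ : Type) (iγ : HeytingAlgebra γ), @Models γ iγ T ∧
    ∃ f : β → γ, Function.Injective f ∧
      @IsBrHom β γ _ iγ.toGeneralizedHeytingAlgebra f


section FilterQuot

variable {α : Type} [HeytingAlgebra α]

structure BFilter (α : Type) [HeytingAlgebra α] where
  carrier : Set α
  top_mem : ⊤ ∈ carrier
  mp' : ∀ a b : α, a ∈ carrier → (a ⇨ b) ∈ carrier → b ∈ carrier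

namespace BFilter

variable (G : BFilter α)

lemma himp_mem_of_le {a b : α} (h : a ≤ b) : (a ⇨ b) ∈ G.carrier := by
  rw [himp_eq_top_iff.2 h]; exact G.top_mem

lemma inf_mem {a b : α} (ha : a ∈ G.carrier) (hb : b ∈ G.carrier) : a ⊓ b ∈ G.carrier :=
  G.mp' b _ hb (G.mp' a _ ha (G.himp_mem_of_le (le_himp_iff.2 le_rfl)))

lemma himp_mem_of_inf_le {x a b : α} (hx : x ∈ G.carrier) (h : x ⊓ a ≤ b) :
    (a ⇨ b) ∈ G.carrier :=
  G.mp' x _ hx (G.himp_mem_of_le (le_himp_iff.2 h))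

lemma himp_trans_mem {a b c : α} (h1 : (a ⇨ b) ∈ G.carrier) (h2 : (b ⇨ c) ∈ G.carrier) :
    (a ⇨ c) ∈ G.carrier := by
  refine G.himp_mem_of_inf_le (G.inf_mem h1 h2) ?_
  calc (a ⇨ b) ⊓ (b ⇨ c) ⊓ a ≤ (b ⇨ c) ⊓ b :=
        le_inf (inf_le_left.trans inf_le_right)
          ((inf_le_inf_right a inf_le_left).trans himp_inf_le)
    _ ≤ c := himp_inf_le

def rel (a b : α) : Prop := (a ⇨ b) ∈ G.carrier ∧ (b ⇨ a) ∈ G.carrier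

def sd : Setoid α where
  r := G.rel
  iseqv := ⟨fun _ => ⟨G.himp_mem_of_le le_rfl, G.himp_mem_of_le le_rfl⟩,
    fun h => ⟨h.2, h.1⟩,
    fun h h' => ⟨G.himp_trans_mem h.1 h'.1, G.himp_trans_mem h'.2 h.2⟩⟩

def Q : Type := Quotient G.sd

def qmk (a : α) : G.Q := Quotient.mk G.sd a

lemma inf_comp {a a' b b' : α} (ha : G.rel a a') (hb : G.rel b b') :
    G.rel (a ⊓ b) (a' ⊓ b') := by
  constructor
  · refine G.himp_mem_of_inf_le (G.inf_mem ha.1 hb.1) ?_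
    exact le_inf ((inf_le_inf inf_le_left inf_le_left).trans himp_inf_le)
      ((inf_le_inf inf_le_right inf_le_right).trans himp_inf_le)
  · refine G.himp_mem_of_inf_le (G.inf_mem ha.2 hb.2) ?_
    exact le_inf ((inf_le_inf inf_le_left inf_le_left).trans himp_inf_le)
      ((inf_le_inf inf_le_right inf_le_right).trans himp_inf_le)

lemma sup_aux {a a' b b' : α} (h1 : (a ⇨ a') ∈ G.carrier) (h2 : (b ⇨ b') ∈ G.carrier) :
    ((a ⊔ b) ⇨ (a' ⊔ b')) ∈ G.carrier := by
  refine G.himp_mem_of_inf_le (G.inf_mem h1 h2) ?_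
  rw [inf_sup_left]
  exact sup_le_sup ((inf_le_inf_right a inf_le_left).trans himp_inf_le)
    ((inf_le_inf_right b inf_le_right).trans himp_inf_le)

lemma sup_comp {a a' b b' : α} (ha : G.rel a a') (hb : G.rel b b') :
    G.rel (a ⊔ b) (a' ⊔ b') :=
  ⟨G.sup_aux ha.1 hb.1, G.sup_aux ha.2 hb.2⟩

lemma himp_aux {a a' b b' : α} (h1 : (a' ⇨ a) ∈ G.carrier) (h2 : (b ⇨ b') ∈ G.carrier) :
    ((a ⇨ b) ⇨ (a' ⇨ b')) ∈ G.carrier := by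
  refine G.himp_mem_of_inf_le (G.inf_mem h1 h2) ?_
  rw [le_himp_iff]
  have s1 : (a' ⇨ a) ⊓ (b ⇨ b') ⊓ (a ⇨ b) ⊓ a' ≤ a :=
    (inf_le_inf_right a' (inf_le_left.trans inf_le_left)).trans himp_inf_le
  have s2 : (a' ⇨ a) ⊓ (b ⇨ b') ⊓ (a ⇨ b) ⊓ a' ≤ b :=
    (le_inf (inf_le_left.trans inf_le_right) s1).trans himp_inf_le
  exact (le_inf ((inf_le_left.trans inf_le_left).trans inf_le_right) s2).trans himp_inf_le

lemma himp_comp {a a' b b' : α} (ha : G.rel a a') (hb : G.rel b b') :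
    G.rel (a ⇨ b) (a' ⇨ b') :=
  ⟨G.himp_aux ha.2 hb.1, G.himp_aux ha.1 hb.2⟩

def qmap₂ (f : α → α → α)
    (h : ∀ a a' b b', G.rel a a' → G.rel b b' → G.rel (f a b) (f a' b')) :
    G.Q → G.Q → G.Q :=
  fun x y => Quotient.liftOn₂ x y (fun a b => G.qmk (f a b))
    (fun a b a' b' ha hb => Quotient.sound (h a a' b b' ha hb))

instance instPO : PartialOrder G.Q where
  le x y := Quotient.liftOn₂ x y (fun a b => (a ⇨ b) ∈ G.carrier)
    (fun a b a' b' ha hb => propext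
      ⟨fun h => G.himp_trans_mem ha.2 (G.himp_trans_mem h hb.1),
       fun h => G.himp_trans_mem ha.1 (G.himp_trans_mem h hb.2)⟩)
  le_refl := by
    intro x
    induction x using Quotient.ind with
    | _ a => exact G.himp_mem_of_le le_rfl
  le_trans x y z := Quotient.inductionOn₃ x y z
    (fun a b c h1 h2 => G.himp_trans_mem h1 h2)
  le_antisymm x y := Quotient.inductionOn₂ x y (fun a b h1 h2 => Quotient.sound ⟨h1, h2⟩)

lemma qmk_le_qmk {a b : α} : (G.qmk a ≤ G.qmk b) ↔ (a ⇨ b) ∈ G.carrier := Iff.rfl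

instance instLattice : Lattice G.Q where
  __ := G.instPO
  sup := G.qmap₂ (· ⊔ ·) (fun _ _ _ _ ha hb => G.sup_comp ha hb)
  inf := G.qmap₂ (· ⊓ ·) (fun _ _ _ _ ha hb => G.inf_comp ha hb)
  le_sup_left x y := Quotient.inductionOn₂ x y (fun a b =>
    show (a ⇨ a ⊔ b) ∈ G.carrier from G.himp_mem_of_le le_sup_left)
  le_sup_right x y := Quotient.inductionOn₂ x y (fun a b =>
    show (b ⇨ a ⊔ b) ∈ G.carrier from G.himp_mem_of_le le_sup_right)
  sup_le x y z := Quotient.inductionOn₃ x y z (fun a b c h1 h2 => by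
    show (a ⊔ b ⇨ c) ∈ G.carrier
    refine G.himp_mem_of_inf_le (G.inf_mem h1 h2) ?_
    rw [inf_sup_left]
    exact sup_le ((inf_le_inf_right a inf_le_left).trans himp_inf_le)
      ((inf_le_inf_right b inf_le_right).trans himp_inf_le))
  inf_le_left x y := Quotient.inductionOn₂ x y (fun a b =>
    show (a ⊓ b ⇨ a) ∈ G.carrier from G.himp_mem_of_le inf_le_left)
  inf_le_right x y := Quotient.inductionOn₂ x y (fun a b =>
    show (a ⊓ b ⇨ b) ∈ G.carrier from G.himp_mem_of_le inf_le_right)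
  le_inf x y z := Quotient.inductionOn₃ x y z (fun a b c h1 h2 => by
    show (a ⇨ b ⊓ c) ∈ G.carrier
    refine G.himp_mem_of_inf_le (G.inf_mem h1 h2) ?_
    exact le_inf ((inf_le_inf_right a inf_le_left).trans himp_inf_le)
      ((inf_le_inf_right a inf_le_right).trans himp_inf_le))

instance instHA : HeytingAlgebra G.Q where
  __ := G.instLattice
  top := G.qmk ⊤
  le_top x := Quotient.ind (fun a => show (a ⇨ ⊤) ∈ G.carrier from G.himp_mem_of_le le_top) x
  bot := G.qmk ⊥
  bot_le x := Quotient.ind (fun a => show (⊥ ⇨ a) ∈ G.carrier from G.himp_mem_of_le bot_le) x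
  himp := G.qmap₂ (· ⇨ ·) (fun _ _ _ _ ha hb => G.himp_comp ha hb)
  le_himp_iff x y z := Quotient.inductionOn₃ x y z (fun a b c => by
    show (a ⇨ b ⇨ c) ∈ G.carrier ↔ (a ⊓ b ⇨ c) ∈ G.carrier
    rw [himp_himp])
  compl x := G.qmap₂ (· ⇨ ·) (fun _ _ _ _ ha hb => G.himp_comp ha hb) x (G.qmk ⊥)
  himp_bot _ := rfl

lemma qmk_inf (a b : α) : G.qmk (a ⊓ b) = G.qmk a ⊓ G.qmk b := rfl
lemma qmk_sup (a b : α) : G.qmk (a ⊔ b) = G.qmk a ⊔ G.qmk b := rfl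
lemma qmk_himp (a b : α) : G.qmk (a ⇨ b) = G.qmk a ⇨ G.qmk b := rfl
lemma qmk_top : G.qmk ⊤ = (⊤ : G.Q) := rfl
lemma qmk_bot : G.qmk ⊥ = (⊥ : G.Q) := rfl

lemma qmk_evalB (z : α) (ν : ℕ → α) (A : Fml) :
    Fml.evalB (G.qmk z) (fun n => G.qmk (ν n)) A = G.qmk (A.evalB z ν) := by
  induction A with
  | var n => rfl
  | bot => rfl
  | and A B ihA ihB => simp only [Fml.evalB]; rw [ihA, ihB]; rfl
  | or A B ihA ihB => simp only [Fml.evalB]; rw [ihA, ihB]; rfl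
  | imp A B ihA ihB => simp only [Fml.evalB]; rw [ihA, ihB]; rfl

lemma models_Q {T : Set Fml} (hT : Models α T) : Models G.Q T := by
  intro A hA ν
  let ν' : ℕ → α := fun n => Quotient.out (ν n)
  have hν : (fun n => G.qmk (ν' n)) = ν := funext fun n => Quotient.out_eq _
  show Fml.evalB ⊥ ν A = ⊤
  rw [← hν, ← G.qmk_bot, G.qmk_evalB]
  have := hT A hA ν'
  rw [show Fml.eval ν' A = Fml.evalB ⊥ ν' A from rfl] at this
  rw [this]; rfl

end BFilter

end FilterQuot

section Extra

lemma evalB_pi {I : Type} {γ : I → Type} [∀ i, GeneralizedHeytingAlgebra (γ i)]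
    (z : ∀ i, γ i) (ν : ℕ → ∀ i, γ i) (A : Fml) (i : I) :
    (A.evalB z ν) i = A.evalB (z i) (fun n => ν n i) := by
  induction A with
  | var n => rfl
  | bot => rfl
  | and A B ihA ihB => simp only [Fml.evalB, Pi.inf_apply, ihA, ihB]
  | or A B ihA ihB => simp only [Fml.evalB, Pi.sup_apply, ihA, ihB]
  | imp A B ihA ihB => simp only [Fml.evalB, Pi.himp_apply, ihA, ihB]

lemma brhom_mono {α β : Type} [GeneralizedHeytingAlgebra α] [GeneralizedHeytingAlgebra β]
    {f : α → β} (hf : IsBrHom f) {a b : α} (h : a ≤ b) : f a ≤ f b := by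
  have : f a ⊓ f b = f a := by rw [← hf.1, inf_eq_left.2 h]
  exact inf_eq_left.1 this

/-- V⁺ is closed under homomorphic images, subalgebras and products,
i.e. it is a variety of Brouwerian algebras. -/
theorem stmt4 (T : Set Fml) :
    (∀ (β γ : Type) [GeneralizedHeytingAlgebra β] [GeneralizedHeytingAlgebra γ],
      InVPlus T β → ∀ φ : β → γ, Function.Surjective φ → IsBrHom φ → InVPlus T γ) ∧
    (∀ (β γ : Type) [GeneralizedHeytingAlgebra β] [GeneralizedHeytingAlgebra γ],
      InVPlus T β → ∀ f : γ → β, Function.Injective f → IsBrHom f → InVPlus T γ) ∧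
    (∀ (I : Type) (β : I → Type) [∀ i, GeneralizedHeytingAlgebra (β i)],
      (∀ i, InVPlus T (β i)) → InVPlus T (∀ i, β i)) := by
  refine ⟨?_, ?_, ?_⟩
  · -- homomorphic images
    rintro β γ _ _ ⟨A, iA, hAmod, f, hfinj, hfinf, hfsup, hfhimp, hftop⟩ φ hφsurj
      ⟨hφinf, hφsup, hφhimp, hφtop⟩
    -- the filter generated by the image of the kernel filter of φ
    set G : BFilter A :=
      { carrier := {x | ∃ u : β, φ u = ⊤ ∧ f u ≤ x}
        top_mem := ⟨⊤, hφtop, le_top⟩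
        mp' := by
          rintro x y ⟨u, hu, hux⟩ ⟨v, hv, hvxy⟩
          refine ⟨u ⊓ v, by rw [hφinf, hu, hv, inf_top_eq], ?_⟩
          rw [hfinf]
          calc f u ⊓ f v ≤ x ⊓ (x ⇨ y) := inf_le_inf hux hvxy
            _ ≤ y := inf_comm x (x ⇨ y) ▸ himp_inf_le } with hGdef
    have monφ : ∀ {a b : β}, a ≤ b → φ a ≤ φ b := by
      intro a b h
      have : φ a ⊓ φ b = φ a := by rw [← hφinf, inf_eq_left.2 h]
      exact inf_eq_left.1 this
    have key : ∀ b b' : β, (f b ⇨ f b') ∈ G.carrier ↔ φ b ≤ φ b' := by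
      intro b b'
      constructor
      · rintro ⟨u, hu, hle⟩
        have h1 : f (u ⊓ b) ≤ f b' := by
          rw [hfinf]; exact le_himp_iff.1 hle
        have h2 : f ((u ⊓ b) ⇨ b') = f ⊤ := by
          rw [hfhimp, hftop, himp_eq_top_iff.2 h1]
        have h3 : u ⊓ b ≤ b' := himp_eq_top_iff.1 (hfinj h2)
        have h4 : φ u ≤ φ (b ⇨ b') := monφ (le_himp_iff.2 h3)
        rw [hu, top_le_iff, hφhimp, himp_eq_top_iff] at h4
        exact h4
      · intro h
        exact ⟨b ⇨ b', by rw [hφhimp, himp_eq_top_iff.2 h], (hfhimp b b').le⟩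
    have eqmk : ∀ x y : β, φ x = φ y → G.qmk (f x) = G.qmk (f y) := by
      intro x y h
      exact Quotient.sound ⟨(key x y).2 h.le, (key y x).2 h.ge⟩
    let s : γ → β := Function.surjInv hφsurj
    have hs : ∀ c, φ (s c) = c := Function.surjInv_eq hφsurj
    refine ⟨G.Q, G.instHA, G.models_Q hAmod, fun c => G.qmk (f (s c)), ?_, ?_, ?_, ?_, ?_⟩
    · intro c c' h
      have h2 := Quotient.exact h
      have := le_antisymm ((key _ _).1 h2.1) ((key _ _).1 h2.2)
      rwa [hs, hs] at this
    · intro c c'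
      have : φ (s (c ⊓ c')) = φ (s c ⊓ s c') := by rw [hφinf, hs, hs, hs]
      show G.qmk (f (s (c ⊓ c'))) = G.qmk (f (s c)) ⊓ G.qmk (f (s c'))
      rw [eqmk _ _ this, hfinf, G.qmk_inf]
    · intro c c'
      have : φ (s (c ⊔ c')) = φ (s c ⊔ s c') := by rw [hφsup, hs, hs, hs]
      show G.qmk (f (s (c ⊔ c'))) = G.qmk (f (s c)) ⊔ G.qmk (f (s c'))
      rw [eqmk _ _ this, hfsup, G.qmk_sup]
    · intro c c'
      have : φ (s (c ⇨ c')) = φ (s c ⇨ s c') := by rw [hφhimp, hs, hs, hs]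
      show G.qmk (f (s (c ⇨ c'))) = G.qmk (f (s c)) ⇨ G.qmk (f (s c'))
      rw [eqmk _ _ this, hfhimp, G.qmk_himp]
    · have : φ (s ⊤) = φ ⊤ := by rw [hs, hφtop]
      show G.qmk (f (s ⊤)) = ⊤
      rw [eqmk _ _ this, hftop, G.qmk_top]
  · -- subalgebras
    rintro β γ _ _ ⟨A, iA, hAmod, g, hginj, hginf, hgsup, hghimp, hgtop⟩ f hfinj
      ⟨hfinf, hfsup, hfhimp, hftop⟩
    refine ⟨A, iA, hAmod, g ∘ f, hginj.comp hfinj, ?_, ?_, ?_, ?_⟩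
    · intro a b; simp only [Function.comp_apply, hfinf, hginf]
    · intro a b; simp only [Function.comp_apply, hfsup, hgsup]
    · intro a b; simp only [Function.comp_apply, hfhimp, hghimp]
    · simp only [Function.comp_apply, hftop, hgtop]
  · -- products
    intro I β inst h
    choose γ iγ hmod f hinj hhom using h
    letI : ∀ i, HeytingAlgebra (γ i) := iγ
    refine ⟨∀ i, γ i, Pi.instHeytingAlgebra, ?_, fun b i => f i (b i), ?_, ?_, ?_, ?_, ?_⟩
    · intro A hA ν
      show Fml.evalB ⊥ ν A = ⊤
      funext i
      rw [evalB_pi]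
      have := hmod i A hA (fun n => ν n i)
      rw [show Fml.eval (fun n => ν n i) A = Fml.evalB ⊥ (fun n => ν n i) A from rfl] at this
      rw [show (⊥ : ∀ i, γ i) i = ⊥ from rfl, this]; rfl
    · intro x y hxy
      funext i
      exact hinj i (congrFun hxy i)
    · intro a b; funext i
      show f i ((a ⊓ b) i) = _
      rw [show (a ⊓ b) i = a i ⊓ b i from rfl, (hhom i).1]; rfl
    · intro a b; funext i
      show f i ((a ⊔ b) i) = _
      rw [show (a ⊔ b) i = a i ⊔ b i from rfl, (hhom i).2.1]; rfl
    · intro a b; funext i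
      show f i ((a ⇨ b) i) = _
      rw [show (a ⇨ b) i = a i ⇨ b i from rfl, (hhom i).2.2.1]; rfl
    · funext i
      show f i ((⊤ : ∀ i, β i) i) = _
      rw [show (⊤ : ∀ i, β i) i = ⊤ from rfl, (hhom i).2.2.2]; rfl

end Extra
end

section
/- For any set Γ of positive propositional formulas, the positive fragment of the superintuitionistic logic Int + Γ equals the positive logic Int⁺ + Γ; that is, (Int + Γ) ∩ Frm⁺ = Int⁺ + Γ, where Frm⁺ is the set of formulas built from ∧, ∨, → only. -/
/-!
Let `A` be a positive formula of `Int + Γ` and `P` a positive logic containing `Γ`. Its Lindenbaum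
algebra `L` (positive formulas modulo provable equivalence in `P`) is a Brouwerian algebra
validating `P`, in which the class of `A` is `⊤` only if `A ∈ P`. Let `d` be the meet of the
classes of the variables of `A`. The principal filter `↑d` of `L` is a Heyting algebra whose
Brouwerian operations are those of `L`, so the positive formulas of `Γ`, hence all of `Int + Γ`,
are valid in it. Evaluating `A` in `↑d` at the canonical valuation gives `[A] = ⊤`, so `A ∈ P`.
Conversely, `(Int + Γ) ∩ Frm⁺` is itself a positive logic containing `Γ`.
-/

class GeneralizedHeytingPreorder (α : Type*) extends Preorder α, Min α, Max α, HImp α, Top α where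
  inf_le_left (a b : α) : a ⊓ b ≤ a
  inf_le_right (a b : α) : a ⊓ b ≤ b
  le_inf (a b c : α) : a ≤ b → a ≤ c → a ≤ b ⊓ c
  le_sup_left (a b : α) : a ≤ a ⊔ b
  le_sup_right (a b : α) : b ≤ a ⊔ b
  sup_le (a b c : α) : a ≤ c → b ≤ c → a ⊔ b ≤ c
  le_top (a : α) : a ≤ ⊤
  le_himp_iff (a b c : α) : a ≤ b ⇨ c ↔ a ⊓ b ≤ c

namespace GeneralizedHeytingPreorder

variable {α : Type*} [GeneralizedHeytingPreorder α] {a a' b b' : α}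

lemma inf_le_inf (ha : a ≤ a') (hb : b ≤ b') : a ⊓ b ≤ a' ⊓ b' :=
  le_inf _ _ _ ((inf_le_left a b).trans ha) ((inf_le_right a b).trans hb)

lemma sup_le_sup (ha : a ≤ a') (hb : b ≤ b') : a ⊔ b ≤ a' ⊔ b' :=
  sup_le _ _ _ (ha.trans (le_sup_left a' b')) (hb.trans (le_sup_right a' b'))

lemma himp_le_himp (ha : a' ≤ a) (hb : b ≤ b') : a ⇨ b ≤ a' ⇨ b' :=
  (le_himp_iff _ _ _).2 <| (inf_le_inf le_rfl ha).trans <|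
    ((le_himp_iff _ _ _).1 le_rfl).trans hb

instance : GeneralizedHeytingAlgebra (Antisymmetrization α (· ≤ ·)) where
  inf := Quotient.map₂ (· ⊓ ·) fun _ _ ha _ _ hb => ⟨inf_le_inf ha.1 hb.1, inf_le_inf ha.2 hb.2⟩
  sup := Quotient.map₂ (· ⊔ ·) fun _ _ ha _ _ hb => ⟨sup_le_sup ha.1 hb.1, sup_le_sup ha.2 hb.2⟩
  himp := Quotient.map₂ (· ⇨ ·) fun _ _ ha _ _ hb =>
    ⟨himp_le_himp ha.2 hb.1, himp_le_himp ha.1 hb.2⟩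
  top := toAntisymmetrization _ ⊤
  inf_le_left := by rintro ⟨a⟩ ⟨b⟩; exact inf_le_left a b
  inf_le_right := by rintro ⟨a⟩ ⟨b⟩; exact inf_le_right a b
  le_inf := by rintro ⟨a⟩ ⟨b⟩ ⟨c⟩; exact le_inf a b c
  le_sup_left := by rintro ⟨a⟩ ⟨b⟩; exact le_sup_left a b
  le_sup_right := by rintro ⟨a⟩ ⟨b⟩; exact le_sup_right a b
  sup_le := by rintro ⟨a⟩ ⟨b⟩ ⟨c⟩; exact sup_le a b c
  le_top := by rintro ⟨a⟩; exact le_top a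
  le_himp_iff := by rintro ⟨a⟩ ⟨b⟩ ⟨c⟩; exact le_himp_iff a b c

end GeneralizedHeytingPreorder

namespace Set.Ici

instance heytingAlgebra {β : Type*} [GeneralizedHeytingAlgebra β] {d : β} :
    HeytingAlgebra (Ici d) :=
  HeytingAlgebra.ofHImp (fun x y => ⟨x ⇨ y, y.2.trans le_himp⟩) fun _ _ _ => le_himp_iff

lemma isBrHom_val {β : Type} [GeneralizedHeytingAlgebra β] {d : β} : IsBrHom (Subtype.val : Ici d → β) :=
  ⟨fun _ _ => rfl, fun _ _ => rfl, fun _ _ => rfl, rfl⟩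

end Set.Ici

namespace Fml

lemma Positive.subst {A : Fml} (hA : A.Positive) {σ : ℕ → Fml} (hσ : PosSubst σ) :
    (A.subst σ).Positive := by
  induction A with
  | var n => exact hσ n
  | bot => exact hA.elim
  | and A B ihA ihB | or A B ihA ihB | imp A B ihA ihB => exact ⟨ihA hA.1, ihB hA.2⟩

@[simp]
lemma subst_var (A : Fml) : A.subst var = A := by
  induction A <;> simp_all [subst]

section Eval

variable {α β : Type} [GeneralizedHeytingAlgebra α] [GeneralizedHeytingAlgebra β]

lemma evalB_subst (z : α) (ν : ℕ → α) (σ : ℕ → Fml) (A : Fml) :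
    (A.subst σ).evalB z ν = A.evalB z (fun n => (σ n).evalB z ν) := by
  induction A <;> simp_all [subst, evalB]

lemma evalB_congr {z : α} {ν ν' : ℕ → α} {A : Fml} (h : ∀ n ∈ A.vars, ν n = ν' n) :
    A.evalB z ν = A.evalB z ν' := by
  induction A with
  | var n => exact h n (Finset.mem_singleton_self n)
  | bot => rfl
  | and A B ihA ihB | or A B ihA ihB | imp A B ihA ihB =>
    simp only [evalB]
    rw [ihA fun n hn => h n (Finset.mem_union_left _ hn),
      ihB fun n hn => h n (Finset.mem_union_right _ hn)]

lemma Positive.map_evalB {f : α → β} (hf : IsBrHom f) {A : Fml} (hA : A.Positive)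
    (z : α) (z' : β) (ν : ℕ → α) : f (A.evalB z ν) = A.evalB z' (f ∘ ν) := by
  obtain ⟨hinf, hsup, himp, -⟩ := hf
  induction A with
  | var n => rfl
  | bot => exact hA.elim
  | and A B ihA ihB => simp only [evalB, hinf, ihA hA.1, ihB hA.2]
  | or A B ihA ihB => simp only [evalB, hsup, ihA hA.1, ihB hA.2]
  | imp A B ihA ihB => simp only [evalB, himp, ihA hA.1, ihB hA.2]

end Eval

end Fml

lemma isSILogic_setOf_validH (α : Type) [HeytingAlgebra α] : IsSILogic {A | ValidH α A} where
  int_sub _ hA := hA α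
  mp _ _ hAB hA ν := top_le_iff.1 <| (hA ν).ge.trans <| himp_eq_top_iff.1 (hAB ν)
  subst_closed A hA σ ν := by
    rw [Fml.eval, Fml.evalB_subst]
    exact hA _

lemma IntPlus_subset {Γ L : Set Fml} (hL : IsSILogic L) (hΓ : Γ ⊆ L) : IntPlus Γ ⊆ L :=
  Set.sInter_subset_of_mem ⟨hL, hΓ⟩

lemma isSILogic_IntPlus (Γ : Set Fml) : IsSILogic (IntPlus Γ) where
  int_sub _ hA := Set.mem_sInter.2 fun _ hL => hL.1.int_sub hA
  mp A B hAB hA := Set.mem_sInter.2 fun L hL =>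
    hL.1.mp A B (Set.mem_sInter.1 hAB L hL) (Set.mem_sInter.1 hA L hL)
  subst_closed A hA σ := Set.mem_sInter.2 fun L hL =>
    hL.1.subst_closed A (Set.mem_sInter.1 hA L hL) σ

lemma subset_IntPlus (Γ : Set Fml) : Γ ⊆ IntPlus Γ :=
  fun _ hA => Set.mem_sInter.2 fun _ hL => hL.2 hA

lemma isPosLogic_IntPlus_inter_posFml (Γ : Set Fml) : IsPosLogic (IntPlus Γ ∩ PosFml) where
  pos := Set.inter_subset_right
  int_sub := Set.inter_subset_inter_left _ (isSILogic_IntPlus Γ).int_sub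
  mp A B hAB hA := ⟨(isSILogic_IntPlus Γ).mp A B hAB.1 hA.1, hAB.2.2⟩
  subst_closed A hA σ hσ := ⟨(isSILogic_IntPlus Γ).subst_closed A hA.1 σ, hA.2.subst hσ⟩

lemma models_Ici_of_modelsP {β : Type} [GeneralizedHeytingAlgebra β] {d : β} {T : Set Fml}
    (hT : T ⊆ PosFml) (h : ModelsP β T) : Models (Set.Ici d) T := fun A hA ν =>
  Subtype.ext <| ((hT hA).map_evalB Set.Ici.isBrHom_val ⊥ ⊤ ν).trans (h A hA _)

namespace IsPosLogic

variable {P : Set Fml}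

lemma imp_mem_of_eval_le (hP : IsPosLogic P) {X Y : Fml} (hX : X.Positive) (hY : Y.Positive)
    (h : ∀ (α : Type) [HeytingAlgebra α] (ν : ℕ → α), X.eval ν ≤ Y.eval ν) :
    Fml.imp X Y ∈ P :=
  hP.int_sub ⟨fun α _ ν => himp_eq_top_iff.2 (h α ν), hX, hY⟩

lemma mem_of_eval_le (hP : IsPosLogic P) {X Y : Fml} (hX : X ∈ P) (hY : Y.Positive)
    (h : ∀ (α : Type) [HeytingAlgebra α] (ν : ℕ → α), X.eval ν ≤ Y.eval ν) : Y ∈ P :=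
  hP.mp X Y (hP.imp_mem_of_eval_le (hP.pos hX) hY h) hX

lemma mem_of_inf_eval_le (hP : IsPosLogic P) {X Y Z : Fml} (hX : X ∈ P) (hY : Y ∈ P)
    (hZ : Z.Positive)
    (h : ∀ (α : Type) [HeytingAlgebra α] (ν : ℕ → α), X.eval ν ⊓ Y.eval ν ≤ Z.eval ν) :
    Z ∈ P :=
  hP.mp Y Z (hP.mem_of_eval_le hX ⟨hP.pos hY, hZ⟩ fun α _ ν => le_himp_iff.2 (h α ν)) hY

structure LindenbaumPre (_ : IsPosLogic P) : Type where
  val : Fml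
  pos : val.Positive

instance (hP : IsPosLogic P) : GeneralizedHeytingPreorder (LindenbaumPre hP) where
  le A B := Fml.imp A.val B.val ∈ P
  le_refl A := hP.imp_mem_of_eval_le A.pos A.pos fun _ _ _ => le_rfl
  le_trans A B C hAB hBC :=
    hP.mem_of_inf_eval_le hAB hBC ⟨A.pos, C.pos⟩ fun _ _ _ => himp_triangle _ _ _
  min A B := ⟨Fml.and A.val B.val, A.pos, B.pos⟩
  max A B := ⟨Fml.or A.val B.val, A.pos, B.pos⟩
  himp A B := ⟨Fml.imp A.val B.val, A.pos, B.pos⟩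
  top := ⟨Fml.imp (Fml.var 0) (Fml.var 0), trivial, trivial⟩
  inf_le_left A B := hP.imp_mem_of_eval_le ⟨A.pos, B.pos⟩ A.pos fun _ _ _ => inf_le_left
  inf_le_right A B := hP.imp_mem_of_eval_le ⟨A.pos, B.pos⟩ B.pos fun _ _ _ => inf_le_right
  le_inf A B C hB hC := hP.mem_of_inf_eval_le hB hC ⟨A.pos, B.pos, C.pos⟩ fun _ _ _ =>
    (himp_inf_distrib _ _ _).ge
  le_sup_left A B := hP.imp_mem_of_eval_le A.pos ⟨A.pos, B.pos⟩ fun _ _ _ => le_sup_left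
  le_sup_right A B := hP.imp_mem_of_eval_le B.pos ⟨A.pos, B.pos⟩ fun _ _ _ => le_sup_right
  sup_le A B C hA hB := hP.mem_of_inf_eval_le hA hB ⟨⟨A.pos, B.pos⟩, C.pos⟩ fun _ _ _ =>
    (sup_himp_distrib _ _ _).ge
  le_top A := hP.imp_mem_of_eval_le A.pos ⟨trivial, trivial⟩ fun _ _ _ => le_himp_iff.2 inf_le_right
  le_himp_iff A B C :=
    ⟨fun h => hP.mem_of_eval_le h ⟨⟨A.pos, B.pos⟩, C.pos⟩ fun _ _ _ => (himp_himp _ _ _).le,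
      fun h => hP.mem_of_eval_le h ⟨A.pos, B.pos, C.pos⟩ fun _ _ _ => (himp_himp _ _ _).ge⟩

abbrev Lindenbaum (hP : IsPosLogic P) : Type := Antisymmetrization (LindenbaumPre hP) (· ≤ ·)

lemma toAntisymmetrization_eq_top_iff (hP : IsPosLogic P) (A : LindenbaumPre hP) :
    toAntisymmetrization (· ≤ ·) A = (⊤ : hP.Lindenbaum) ↔ A.val ∈ P := by
  rw [← top_le_iff]
  refine ⟨fun h => hP.mp _ _ h ?_,
    fun h => hP.mem_of_eval_le h ⟨(⊤ : LindenbaumPre hP).pos, A.pos⟩ fun _ _ _ => le_himp⟩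
  exact hP.int_sub ⟨fun _ _ _ => himp_self, trivial, trivial⟩

lemma pEval_toAntisymmetrization (hP : IsPosLogic P) {B : Fml} (hB : B.Positive)
    {σ : ℕ → Fml} (hσ : PosSubst σ) :
    B.pEval (fun n => toAntisymmetrization (· ≤ ·) (⟨σ n, hσ n⟩ : LindenbaumPre hP)) =
      toAntisymmetrization (· ≤ ·) (⟨B.subst σ, hB.subst hσ⟩ : LindenbaumPre hP) := by
  induction B with
  | var n => rfl
  | bot => exact hB.elim
  | and A B ihA ihB | or A B ihA ihB | imp A B ihA ihB =>
    exact congrArg₂ _ (ihA hB.1) (ihB hB.2)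

lemma modelsP_lindenbaum (hP : IsPosLogic P) : ModelsP hP.Lindenbaum P := by
  intro A hA ν
  let σ : ℕ → Fml := fun n => (ofAntisymmetrization (· ≤ ·) (ν n)).val
  have hσ : PosSubst σ := fun n => (ofAntisymmetrization (· ≤ ·) (ν n)).pos
  have hν : ν = fun n => toAntisymmetrization (· ≤ ·) (⟨σ n, hσ n⟩ : LindenbaumPre hP) :=
    funext fun n => (toAntisymmetrization_ofAntisymmetrization _ _).symm
  rw [hν, pEval_toAntisymmetrization hP (hP.pos hA) hσ, toAntisymmetrization_eq_top_iff]
  exact hP.subst_closed A hA σ hσ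

lemma mem_of_mem_IntPlus (hP : IsPosLogic P) {Γ : Set Fml} (hΓ : Γ ⊆ PosFml) (hΓP : Γ ⊆ P)
    {A : Fml} (hA : A ∈ IntPlus Γ) (hApos : A.Positive) : A ∈ P := by
  let atom : ℕ → hP.Lindenbaum := fun n => toAntisymmetrization (· ≤ ·) ⟨Fml.var n, trivial⟩
  let d : hP.Lindenbaum := A.vars.inf atom
  have hmodels : Models (Set.Ici d) Γ :=
    models_Ici_of_modelsP hΓ fun G hG => modelsP_lindenbaum hP G (hΓP hG)
  have hvalid : ValidH (Set.Ici d) A := IntPlus_subset (isSILogic_setOf_validH _) hmodels hA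
  let ν : ℕ → Set.Ici d := fun n =>
    if h : n ∈ A.vars then ⟨atom n, Finset.inf_le (f := atom) h⟩ else ⊤
  have hν : A.pEval atom = ⊤ := by
    have := congrArg Subtype.val (hvalid ν)
    rw [Fml.eval, hApos.map_evalB Set.Ici.isBrHom_val _ ⊤] at this
    refine (Fml.evalB_congr fun n hn => ?_).trans this
    simp [ν, hn]
  rw [pEval_toAntisymmetrization hP hApos (σ := Fml.var) fun _ => trivial,
    toAntisymmetrization_eq_top_iff] at hν
  simpa using hν

end IsPosLogic

/-- for any set Γ of positive formulas, (Int + Γ) ∩ Fml⁺ = Int⁺ + Γ. -/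
theorem stmt5 (Γ : Set Fml) (hΓ : Γ ⊆ PosFml) :
    IntPlus Γ ∩ PosFml = IntPosPlus Γ := by
  refine Set.Subset.antisymm (fun A hA => Set.mem_sInter.2 ?_) <|
    Set.sInter_subset_of_mem ⟨isPosLogic_IntPlus_inter_posFml Γ,
      fun G hG => ⟨subset_IntPlus Γ hG, hΓ hG⟩⟩
  rintro P ⟨hP, hΓP⟩
  exact hP.mem_of_mem_IntPlus hΓ hΓP hA.1 hA.2
end

section
/- A variety V of Heyting algebras is B-saturated if and only if for every algebra A ∈ V and every finite set of elements a₁,…,aₙ ∈ A, the Brouwerian subalgebra B of the {∧,∨,→,1}-reduct of A generated by a₁,…,aₙ, regarded as a Heyting algebra B⁰ (with least element a₁ ∧ … ∧ aₙ), belongs to V. -/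
section Aux

lemma evalB_hom {γ δ : Type} [GeneralizedHeytingAlgebra γ] [GeneralizedHeytingAlgebra δ]
    (f : γ → δ) (hf : IsBrHom f) (z : γ) (ν : ℕ → γ) (A : Fml) :
    f (A.evalB z ν) = A.evalB (f z) (f ∘ ν) := by
  induction A with
  | var n => rfl
  | bot => rfl
  | and A B ihA ihB => simp [Fml.evalB, hf.1, ihA, ihB]
  | or A B ihA ihB => simp [Fml.evalB, hf.2.1, ihA, ihB]
  | imp A B ihA ihB => simp [Fml.evalB, hf.2.2.1, ihA, ihB]

lemma evalB_congr_vars {γ : Type} [GeneralizedHeytingAlgebra γ]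
    (z : γ) (ν ν' : ℕ → γ) (A : Fml) (h : ∀ m ∈ A.vars, ν m = ν' m) :
    A.evalB z ν = A.evalB z ν' := by
  induction A with
  | var n => exact h n (by simp [Fml.vars])
  | bot => rfl
  | and A B ihA ihB =>
      simp only [Fml.evalB]
      rw [ihA (fun m hm => h m (by simp [Fml.vars, hm])),
          ihB (fun m hm => h m (by simp [Fml.vars, hm]))]
  | or A B ihA ihB =>
      simp only [Fml.evalB]
      rw [ihA (fun m hm => h m (by simp [Fml.vars, hm])),
          ihB (fun m hm => h m (by simp [Fml.vars, hm]))]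
  | imp A B ihA ihB =>
      simp only [Fml.evalB]
      rw [ihA (fun m hm => h m (by simp [Fml.vars, hm])),
          ihB (fun m hm => h m (by simp [Fml.vars, hm]))]

lemma brClosed_genBr {α : Type} [GeneralizedHeytingAlgebra α] (s : Set α) :
    BrClosed (genBr s) := by
  refine ⟨fun S hS => hS.1.1, fun a ha b hb => ?_⟩
  exact ⟨fun S hS => (hS.1.2 a (ha S hS) b (hb S hS)).1,
    fun S hS => (hS.1.2 a (ha S hS) b (hb S hS)).2.1,
    fun S hS => (hS.1.2 a (ha S hS) b (hb S hS)).2.2⟩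

lemma subset_genBr {α : Type} [GeneralizedHeytingAlgebra α] (s : Set α) : s ⊆ genBr s :=
  fun x hx S hS => hS.2 hx

lemma genBr_subset {α : Type} [GeneralizedHeytingAlgebra α] {s S : Set α}
    (h1 : BrClosed S) (h2 : s ⊆ S) : genBr s ⊆ S :=
  fun _ hx => hx S ⟨h1, h2⟩

lemma genBr_le {α : Type} [GeneralizedHeytingAlgebra α] {n : ℕ} (a : Fin n → α) :
    ∀ x ∈ genBr (Set.range a), Finset.univ.inf a ≤ x := by
  have : genBr (Set.range a) ⊆ {x | Finset.univ.inf a ≤ x} := by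
    apply genBr_subset
    · refine ⟨le_top, ?_⟩
      intro x hx y hy
      exact ⟨le_inf hx hy, hx.trans le_sup_left, le_himp_iff.2 (inf_le_of_left_le hy)⟩
    · rintro _ ⟨i, rfl⟩
      exact Finset.inf_le (Finset.mem_univ i)
  exact fun x hx => this hx

lemma inf_mem_genBr {α : Type} [GeneralizedHeytingAlgebra α] {n : ℕ} (a : Fin n → α) :
    Finset.univ.inf a ∈ genBr (Set.range a) := by
  have key : ∀ s : Finset (Fin n), s.inf a ∈ genBr (Set.range a) := by
    intro s
    induction s using Finset.induction_on with
    | empty => simpa using (brClosed_genBr (Set.range a)).1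
    | @insert i s hi ih =>
        rw [Finset.inf_insert]
        exact ((brClosed_genBr (Set.range a)).2 _ (subset_genBr _ ⟨i, rfl⟩) _ ih).1
  exact key Finset.univ

/-- The Heyting algebra structure on a Brouwerian-closed subset with least element `m`. -/
def subHA {α : Type} [HeytingAlgebra α] {S : Set α} {m : α}
    (hS : BrClosed S) (hm : m ∈ S) (hms : ∀ x ∈ S, m ≤ x) :
    HeytingAlgebra {x : α // x ∈ S} :=
  let L : Lattice {x : α // x ∈ S} :=
    Subtype.lattice (fun x y hx hy => (hS.2 x hx y hy).2.1)
      (fun x y hx hy => (hS.2 x hx y hy).1)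
  { L with
    top := ⟨⊤, hS.1⟩
    himp := fun x y => ⟨(x : α) ⇨ y, (hS.2 x x.2 y y.2).2.2⟩
    bot := ⟨m, hm⟩
    compl := fun x => ⟨(x : α) ⇨ m, (hS.2 x x.2 m hm).2.2⟩
    le_top := fun x => le_top (α := α) (a := (x : α))
    bot_le := fun x => hms x x.2
    le_himp_iff := fun x y z => le_himp_iff (α := α)
    himp_bot := fun x => rfl }

end Aux

/-- a variety is B-saturated iff for every member A and finitely many
elements a₁,…,aₙ, the generated Brouwerian subreduct, regarded as a Heyting algebra
with least element a₁ ∧ … ∧ aₙ, belongs to the variety (i.e. validates T). -/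
theorem stmt8 (T : Set Fml) :
    BSaturated T ↔
      ∀ (α : Type) [HeytingAlgebra α], Models α T →
        ∀ (n : ℕ) (a : Fin n → α), ∀ A ∈ T, ∀ ν : ℕ → α,
          (∀ m, ν m ∈ genBr (Set.range a)) →
          A.evalB (Finset.univ.inf a) ν = ⊤ := by
  constructor
  · -- B-saturated → subreducts validate T
    intro hB α iα hM n a A hA ν hν
    set S := genBr (Set.range a) with hSdef
    letI iS : HeytingAlgebra {x : α // x ∈ S} :=
      subHA (brClosed_genBr _) (inf_mem_genBr a) (genBr_le a)
    have hcoe : IsBrHom (Subtype.val : {x : α // x ∈ S} → α) :=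
      ⟨fun _ _ => rfl, fun _ _ => rfl, fun _ _ => rfl, rfl⟩
    have hMS : Models {x : α // x ∈ S} T :=
      hB _ iS ⟨α, iα, hM, Subtype.val, Subtype.val_injective, hcoe⟩
    set ν' : ℕ → {x : α // x ∈ S} := fun k => ⟨ν k, hν k⟩ with hν'def
    have h1 : A.eval ν' = ⊤ := hMS A hA ν'
    have h2 := evalB_hom (Subtype.val : {x : α // x ∈ S} → α) hcoe ⊥ ν' A
    have h3 : (Subtype.val : {x : α // x ∈ S} → α) ∘ ν' = ν := funext fun k => rfl
    have h4 : ((⊥ : {x : α // x ∈ S}) : α) = Finset.univ.inf a := rfl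
    rw [h3, h4] at h2
    rw [← h2]
    show ((A.eval ν' : {x : α // x ∈ S}) : α) = ⊤
    rw [h1]
    rfl
  · -- subreducts validate T → B-saturated
    intro h α iα hex A hA ν
    obtain ⟨β, iβ, hMβ, f, hfinj, hf⟩ := hex
    have hmono : ∀ x y : α, x ≤ y → f x ≤ f y := by
      intro x y hxy
      have h1 := hf.1 x y
      rw [inf_eq_left.2 hxy] at h1
      rw [h1]
      exact inf_le_right
    set l : List ℕ := A.vars.toList with hl
    set a : Fin (l.length + 1) → β := Fin.cons (f ⊥) (fun i => f (ν (l.get i))) with ha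
    have hinf : Finset.univ.inf a = f ⊥ := by
      refine le_antisymm (Finset.inf_le (Finset.mem_univ 0)) (Finset.le_inf fun i _ => ?_)
      induction i using Fin.cases with
      | zero => simp [ha]
      | succ j =>
          simp only [ha, Fin.cons_succ]
          exact hmono _ _ bot_le
    set ν' : ℕ → β := fun k => if k ∈ A.vars then f (ν k) else f ⊥ with hν'
    have hmem : ∀ k, ν' k ∈ genBr (Set.range a) := by
      intro k
      by_cases hk : k ∈ A.vars
      · obtain ⟨i, hi⟩ := List.mem_iff_get.1 ((Finset.mem_toList).2 hk)
        refine subset_genBr _ ⟨i.succ, ?_⟩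
        simp only [ha, Fin.cons_succ, hν', if_pos hk]
        exact congrArg (fun x => f (ν x)) (by simpa using hi)
      · refine subset_genBr _ ⟨0, ?_⟩
        simp [ha, hν', hk]
    have h1 := h β hMβ _ a A hA ν' hmem
    rw [hinf] at h1
    have h2 : A.evalB (f ⊥) (f ∘ ν) = ⊤ := by
      rw [evalB_congr_vars (f ⊥) (f ∘ ν) ν' A (fun k hk => by simp [hν', hk, Function.comp])]
      exact h1
    apply hfinj
    rw [show f ⊤ = ⊤ from hf.2.2.2]
    rw [Fml.eval, evalB_hom f hf ⊥ ν A, h2]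
end

section
/- Let V be a B-saturated variety of Heyting algebras, A a formula, π a finite set of propositional variables strictly containing all variables of A, and p ∈ π a variable not occurring in A. Let A^p be the result of replacing every occurrence of ⊥ in A by p, let π^∧ be the conjunction of all variables in π, and let W(A,π,p) := (p → π^∧) → A^p. Then the following are equivalent: (a) A is valid in V; (b) W(A,π,p) is valid in V; (c) A^π (the result of replacing ⊥ by π^∧ in A) is valid in V. -/
/-- Validity of a formula throughout the variety axiomatized by T. -/
def ValidT (T : Set Fml) (A : Fml) : Prop :=
  ∀ (α : Type) [HeytingAlgebra α], Models α T → ValidH α A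

/-! B-saturation lets ⊥ be reinterpreted: for any `c` in a model, the upset `[c, ⊤]` is a
Heyting algebra with least element `c` whose Brouwerian reduct embeds into the model, so it is
again a model, and a valid `A` evaluates to `⊤` whenever ⊥ is read as any lower bound `c` of the
values of its variables. For (a) ⇒ (b), read ⊥ as `c = (p ⇨ π^∧) ⊓ p`; below `e = p ⇨ π^∧`
the elements `c` and `p` agree, and evaluation of `A` respects agreement below `e`, so
`e ≤ A^p`. The other implications are substitution instances:
`p := π^∧` turns `W(A, π, p)` into `A^π`, and `p := ⊥` turns `A^π` into `A`. -/

/-- The formula `W(A, π, p) = (p → π^∧) → A^p`. -/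
def Fml.wajsberg (A : Fml) (π : Finset ℕ) (p : ℕ) : Fml :=
  .imp (.imp (.var p) (conjOf π)) (A.substBot (.var p))

section Evaluation

variable {α : Type} [GeneralizedHeytingAlgebra α]

theorem Fml.evalB_congr_s9 (z : α) {ν ν' : ℕ → α} :
    ∀ A : Fml, (∀ n ∈ A.vars, ν n = ν' n) → A.evalB z ν = A.evalB z ν'
  | .var n, h => h n (Finset.mem_singleton_self n)
  | .bot, _ => rfl
  | .and A B, h | .or A B, h | .imp A B, h => by
      simp only [Fml.vars, Finset.mem_union] at h
      simp only [Fml.evalB, A.evalB_congr_s9 z fun n hn => h n (.inl hn),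
        B.evalB_congr_s9 z fun n hn => h n (.inr hn)]

theorem Fml.evalB_update_of_notMem (z x : α) (ν : ℕ → α) {A : Fml} {p : ℕ}
    (hpA : p ∉ A.vars) : A.evalB z (Function.update ν p x) = A.evalB z ν :=
  A.evalB_congr_s9 z fun _ hn => Function.update_of_ne (ne_of_mem_of_not_mem hn hpA) _ _

theorem Fml.evalB_substBot (z : α) (ν : ℕ → α) (C : Fml) :
    ∀ A : Fml, (A.substBot C).evalB z ν = A.evalB (C.evalB z ν) ν
  | .var _ | .bot => rfl
  | .and A B => by
      rw [Fml.substBot, Fml.evalB, Fml.evalB, Fml.evalB_substBot z ν C A,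
        Fml.evalB_substBot z ν C B]
  | .or A B => by
      rw [Fml.substBot, Fml.evalB, Fml.evalB, Fml.evalB_substBot z ν C A,
        Fml.evalB_substBot z ν C B]
  | .imp A B => by
      rw [Fml.substBot, Fml.evalB, Fml.evalB, Fml.evalB_substBot z ν C A,
        Fml.evalB_substBot z ν C B]

theorem conjList_evalB (z : α) (ν : ℕ → α) :
    ∀ l : List ℕ, (conjList l).evalB z ν = l.toFinset.inf ν
  | [] => himp_self
  | [n] => by simp [conjList, Fml.evalB]
  | n :: k :: l => by
      simp only [conjList, Fml.evalB, conjList_evalB z ν (k :: l), List.toFinset_cons (a := n),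
        Finset.inf_insert]

theorem conjOf_evalB (z : α) (ν : ℕ → α) (π : Finset ℕ) :
    (conjOf π).evalB z ν = π.inf ν := by
  rw [conjOf, conjList_evalB, Finset.sort_toFinset]

theorem Finset.inf_update_inf {ι : Type*} [DecidableEq ι] (s : Finset ι) (f : ι → α)
    (i : ι) :
    s.inf (Function.update f i (s.inf f)) = s.inf f := by
  refine le_antisymm (Finset.le_inf fun j hj => ?_) (Finset.le_inf fun j hj => ?_)
  · rcases eq_or_ne j i with rfl | hji
    · exact (Finset.inf_le hj).trans_eq (Function.update_self ..) |>.trans (Finset.inf_le hj)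
    · exact (Finset.inf_le hj).trans_eq (Function.update_of_ne hji ..)
  · rcases eq_or_ne j i with rfl | hji
    · exact (Function.update_self j (s.inf f) f).ge
    · exact (Finset.inf_le hj).trans_eq (Function.update_of_ne hji ..).symm

theorem inf_himp_eq_inf_himp_inf (e a b : α) : e ⊓ (a ⇨ b) = e ⊓ (e ⊓ a ⇨ e ⊓ b) := by
  rw [himp_inf_distrib, himp_eq_top_iff.2 inf_le_left, top_inf_eq, ← himp_himp, inf_himp]

theorem Fml.inf_evalB_eq_of_inf_eq {e z z' : α} (h : e ⊓ z = e ⊓ z') (ν : ℕ → α) :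
    ∀ A : Fml, e ⊓ A.evalB z ν = e ⊓ A.evalB z' ν
  | .var _ => rfl
  | .bot => h
  | .and A B => by
      rw [Fml.evalB, Fml.evalB, inf_inf_distrib_left, A.inf_evalB_eq_of_inf_eq h ν,
        B.inf_evalB_eq_of_inf_eq h ν, ← inf_inf_distrib_left]
  | .or A B => by
      rw [Fml.evalB, Fml.evalB, inf_sup_left, A.inf_evalB_eq_of_inf_eq h ν,
        B.inf_evalB_eq_of_inf_eq h ν, ← inf_sup_left]
  | .imp A B => by
      rw [Fml.evalB, Fml.evalB, inf_himp_eq_inf_himp_inf, A.inf_evalB_eq_of_inf_eq h ν,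
        B.inf_evalB_eq_of_inf_eq h ν, ← inf_himp_eq_inf_himp_inf]

theorem IsBrHom.map_evalB {β : Type} [GeneralizedHeytingAlgebra β] {f : α → β}
    (hf : IsBrHom f) (z : α) (ν : ℕ → α) : ∀ A : Fml, f (A.evalB z ν) = A.evalB (f z) (f ∘ ν)
  | .var _ | .bot => rfl
  | .and A B => by rw [Fml.evalB, Fml.evalB, hf.1, hf.map_evalB z ν A, hf.map_evalB z ν B]
  | .or A B => by rw [Fml.evalB, Fml.evalB, hf.2.1, hf.map_evalB z ν A, hf.map_evalB z ν B]
  | .imp A B => by rw [Fml.evalB, Fml.evalB, hf.2.2.1, hf.map_evalB z ν A, hf.map_evalB z ν B]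

instance Set.Ici.heytingAlgebra_s9 (c : α) : HeytingAlgebra (Set.Ici c) :=
  HeytingAlgebra.ofHImp (fun a b => ⟨a ⇨ b, b.2.trans le_himp⟩) fun _ _ _ => le_himp_iff

theorem Set.Ici.isBrHom_coe (c : α) : IsBrHom (Subtype.val : Set.Ici c → α) :=
  ⟨fun _ _ => rfl, fun _ _ => rfl, fun _ _ => rfl, rfl⟩

end Evaluation

section Saturation

variable {T : Set Fml} {α : Type} [HeytingAlgebra α]

theorem BSaturated.models_Ici (hT : BSaturated T) (hα : Models α T) (c : α) :
    Models (Set.Ici c) T :=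
  hT _ _ ⟨α, _, hα, Subtype.val, Subtype.val_injective, Set.Ici.isBrHom_coe c⟩

theorem ValidT.evalB_eq_top_of_le (hT : BSaturated T) {A : Fml} (hA : ValidT T A)
    (hα : Models α T) {c : α} {ν : ℕ → α} (hc : ∀ n ∈ A.vars, c ≤ ν n) :
    A.evalB c ν = ⊤ := by
  let ν' : ℕ → Set.Ici c := fun n => ⟨ν n ⊔ c, le_sup_right⟩
  have hval : A.eval ν' = ⊤ := hA _ (hT.models_Ici hα c) ν'
  calc A.evalB c ν = A.evalB (⊥ : Set.Ici c).1 (Subtype.val ∘ ν') :=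
        A.evalB_congr_s9 c fun n hn => (sup_eq_left.2 (hc n hn)).symm
    _ = (A.eval ν').1 := ((Set.Ici.isBrHom_coe c).map_evalB _ _ A).symm
    _ = ⊤ := by rw [hval]; rfl

end Saturation

section Wajsberg

variable {T : Set Fml} {A : Fml} {π : Finset ℕ} {p : ℕ}

theorem validT_wajsberg_of_validT (hT : BSaturated T) (hAπ : A.vars ⊆ π) (hA : ValidT T A) :
    ValidT T (A.wajsberg π p) := by
  intro α _ hα ν
  set e := ν p ⇨ π.inf ν
  have hc : ∀ n ∈ A.vars, e ⊓ ν p ≤ ν n := fun n hn =>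
    inf_comm e (ν p) ▸ inf_himp_le.trans (Finset.inf_le (hAπ hn))
  have hAc : A.evalB (e ⊓ ν p) ν = ⊤ := hA.evalB_eq_top_of_le hT hα hc
  have hAp : e ⊓ A.evalB (ν p) ν = e := by
    rw [A.inf_evalB_eq_of_inf_eq (z' := e ⊓ ν p) (by rw [← inf_assoc, inf_idem]) ν, hAc,
      inf_top_eq]
  simp only [Fml.wajsberg, Fml.eval, Fml.evalB, Fml.evalB_substBot, conjOf_evalB]
  exact himp_eq_top_iff.2 (inf_eq_left.1 hAp)

theorem validT_substBot_conjOf_of_validT_wajsberg (hpA : p ∉ A.vars)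
    (hW : ValidT T (A.wajsberg π p)) : ValidT T (A.substBot (conjOf π)) := by
  intro α _ hα ν
  have h := hW α hα (Function.update ν p (π.inf ν))
  simp only [Fml.wajsberg, Fml.eval, Fml.evalB, Fml.evalB_substBot, conjOf_evalB,
    Finset.inf_update_inf, Function.update_self, himp_self, top_himp,
    Fml.evalB_update_of_notMem _ _ _ hpA] at h
  rwa [Fml.eval, Fml.evalB_substBot, conjOf_evalB]

theorem validT_of_validT_substBot_conjOf (hp : p ∈ π) (hpA : p ∉ A.vars)
    (hAπ : ValidT T (A.substBot (conjOf π))) : ValidT T A := by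
  intro α _ hα ν
  have h := hAπ α hα (Function.update ν p ⊥)
  have hbot : π.inf (Function.update ν p ⊥) = ⊥ :=
    le_bot_iff.1 ((Finset.inf_le hp).trans_eq (Function.update_self ..))
  rwa [Fml.eval, Fml.evalB_substBot, conjOf_evalB, hbot, Fml.evalB_update_of_notMem _ _ _ hpA]
    at h

end Wajsberg

/-- generalized Wajsberg theorem: for a B-saturated variety V,
V ⊨ A iff V ⊨ W(A,π,p) = (p → π^∧) → A^p iff V ⊨ A^π. -/
theorem stmt9 (T : Set Fml) (hT : BSaturated T) (A : Fml) (π : Finset ℕ) (p : ℕ)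
    (hsub : A.vars ⊂ π) (hp : p ∈ π) (hpA : p ∉ A.vars) :
    (ValidT T A ↔
      ValidT T (Fml.imp (Fml.imp (Fml.var p) (conjOf π)) (A.substBot (Fml.var p)))) ∧
    (ValidT T A ↔ ValidT T (A.substBot (conjOf π))) := by
  have hab : ValidT T A → ValidT T (A.wajsberg π p) := validT_wajsberg_of_validT hT hsub.subset
  have hbc : ValidT T (A.wajsberg π p) → ValidT T (A.substBot (conjOf π)) :=
    validT_substBot_conjOf_of_validT_wajsberg hpA
  have hca : ValidT T (A.substBot (conjOf π)) → ValidT T A :=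
    validT_of_validT_substBot_conjOf hp hpA
  exact ⟨⟨hab, hca ∘ hbc⟩, ⟨hbc ∘ hab, hca⟩⟩
end
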